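/- Let 0 < σ < 1/3, α ≥ 10/3 + σ, 0 < s < σ/40, and set ε = N^{−α/2}. There exists N₀ ∈ ℕ such that for all N ≥ N₀ and every eigen-data configuration of size N satisfying Condition R(N,s): (α − 4/3 − 4s)·log N/log δ₂^{−1} ≤ T*_{IP,ε} ≤ (α − 4/3 + 4s)·log N/log δ₂^{−1}; in particular T*_{IP,ε} lies in the interval L̂_α = [(α − 4/3 − 5s) log N/log δ₂^{−1}, (α − 4/3 + 6s) log N/log δ₂^{−1}]. -/

import Mathlib

open Finset MeasureTheory
open scoped Classical

noncomputable section

/-- The Marchenko–Pastur density `ρ_d`. -/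
def mpDensity (d x : ℝ) : ℝ :=
  if 0 < x then
    (1 / (2 * Real.pi * d)) *
      Real.sqrt (max (((1 + Real.sqrt d) ^ 2 - x) * (x - (1 - Real.sqrt d) ^ 2)) 0) / x
  else 0

/-- The quantile `γ_n`: the smallest `t` with `∫_{(-∞,t]} ρ_d = n/N`. -/
def mpQuantile (d : ℝ) (N n : ℕ) : ℝ :=
  sInf {t : ℝ | (∫ x in Set.Iic t, mpDensity d x) = (n : ℝ) / N}

/-- An eigen-data configuration of size `N`: eigenvalues `0 < λ₁ ≤ ⋯ ≤ λ_N` and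
nonnegative weights `β₁, …, β_N` with `β₁ > 0` and `∑ β_n² = 1`. -/
structure EigenData (N : ℕ) where
  lam : ℕ → ℝ
  beta : ℕ → ℝ
  lam_pos : 0 < lam 1
  lam_mono : ∀ m n, 1 ≤ m → m ≤ n → n ≤ N → lam m ≤ lam n
  beta_nonneg : ∀ n, 1 ≤ n → n ≤ N → 0 ≤ beta n
  beta_one_pos : 0 < beta 1
  beta_norm : ∑ n ∈ Finset.Icc 1 N, (beta n) ^ 2 = 1

namespace EigenData

variable {N : ℕ}

/-- `δ_n = λ₁²/λ_n²`. -/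
def δ (E : EigenData N) (n : ℕ) : ℝ := E.lam 1 ^ 2 / E.lam n ^ 2

/-- `Δ_n = λ_n - λ₁`. -/
def Δ (E : EigenData N) (n : ℕ) : ℝ := E.lam n - E.lam 1

/-- `ν_n = β_n²/β₁²`. -/
def ν (E : EigenData N) (n : ℕ) : ℝ := E.beta n ^ 2 / E.beta 1 ^ 2

/-- Condition R(N,s): delocalization, edge gaps and rigidity. -/
def CondR (d s : ℝ) (E : EigenData N) : Prop :=
  (∀ n ∈ Finset.Icc 1 N, E.beta n ≤ (N : ℝ) ^ (-1 / 2 + s / 2 : ℝ)) ∧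
  (∀ n ∈ ({1, 2, N - 1, N} : Set ℕ), (N : ℝ) ^ (-1 / 2 - s / 2 : ℝ) ≤ E.beta n) ∧
  (∀ n ∈ ({N - 1, N - 2} : Set ℕ),
    (N : ℝ) ^ (-2 / 3 - s / 2 : ℝ) ≤ E.lam N - E.lam n ∧
      E.lam N - E.lam n ≤ (N : ℝ) ^ (-2 / 3 + s / 2 : ℝ)) ∧
  (∀ n ∈ ({2, 3} : Set ℕ),
    (N : ℝ) ^ (-2 / 3 - s / 2 : ℝ) ≤ E.lam n - E.lam 1 ∧
      E.lam n - E.lam 1 ≤ (N : ℝ) ^ (-2 / 3 + s / 2 : ℝ)) ∧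
  (∀ n ∈ Finset.Icc 1 N, |E.lam n - mpQuantile d N n| ≤
    (N : ℝ) ^ (-2 / 3 + s / 2 : ℝ) * ((min n (N - n + 1) : ℕ) : ℝ) ^ (-1 / 3 : ℝ))

/-- Condition L(N,p): `λ₂/λ₃ < (λ₁/λ₂)^p`. -/
def CondL (p : ℝ) (E : EigenData N) : Prop :=
  E.lam 2 / E.lam 3 < (E.lam 1 / E.lam 2) ^ p

/-- The QR error function `E_QR(t)`. -/
def EQR (E : EigenData N) (t : ℝ) : ℝ :=
  (∑ n ∈ Finset.Icc 1 N, E.lam n ^ 2 * E.δ n ^ t * E.ν n) /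
      (∑ n ∈ Finset.Icc 1 N, E.δ n ^ t * E.ν n) -
    (∑ n ∈ Finset.Icc 1 N, E.lam n * E.δ n ^ t * E.ν n) ^ 2 /
      (∑ n ∈ Finset.Icc 1 N, E.δ n ^ t * E.ν n) ^ 2

/-- The QR halting time `T_{QR,ε} = inf {t ≥ 0 : E_QR(t) ≤ ε²}`. -/
def TQR (E : EigenData N) (ε : ℝ) : ℝ :=
  sInf {t : ℝ | 0 ≤ t ∧ E.EQR t ≤ ε ^ 2}

/-- The approximate QR halting time `T*_{QR,ε}` with `ε = N^{-α/2}`. -/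
def TstarQR (E : EigenData N) (α : ℝ) : ℝ :=
  (α * Real.log N + 2 * Real.log (E.Δ 2) + Real.log (E.ν 2)) / Real.log (E.δ 2)⁻¹

/-- The inverse power method iterate `λ_IP(t)`. -/
def lamIP (E : EigenData N) (t : ℝ) : ℝ :=
  (∑ n ∈ Finset.Icc 1 N, E.lam n ^ (-2 * t : ℝ) * E.beta n ^ 2) /
    (∑ n ∈ Finset.Icc 1 N, E.lam n ^ (-2 * t - 1 : ℝ) * E.beta n ^ 2)

/-- The inverse power method error `E_IP(t) = λ_IP(t+1)⁻¹ - λ_IP(t)⁻¹`. -/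
def EIP (E : EigenData N) (t : ℝ) : ℝ := (E.lamIP (t + 1))⁻¹ - (E.lamIP t)⁻¹

/-- The inverse power method halting time `T_{IP,ε} = inf {t ≥ 0 : E_IP(t) ≤ ε²}`. -/
def TIP (E : EigenData N) (ε : ℝ) : ℝ :=
  sInf {t : ℝ | 0 ≤ t ∧ E.EIP t ≤ ε ^ 2}

/-- The leading part `E_{IP,0}(t)` of the inverse power method error. -/
def EIP0 (E : EigenData N) (t : ℝ) : ℝ :=
  (∑ n ∈ Finset.Icc 2 N, (1 - E.δ n) * ((E.lam 1)⁻¹ - (E.lam n)⁻¹) * E.δ n ^ t * E.ν n) /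
    ((∑ n ∈ Finset.Icc 1 N, E.δ n ^ t * E.ν n) *
      (∑ n ∈ Finset.Icc 1 N, E.δ n ^ (t + 1) * E.ν n))

/-- The remainder `E_{IP,1}(t) = E_IP(t) - E_{IP,0}(t)`. -/
def EIP1 (E : EigenData N) (t : ℝ) : ℝ := E.EIP t - E.EIP0 t

/-- The approximate inverse power halting time `T*_{IP,ε}` with `ε = N^{-α/2}`. -/
def TstarIP (E : EigenData N) (α : ℝ) : ℝ :=
  (α * Real.log N + 2 * Real.log (1 - E.δ 2 ^ ((1 : ℝ) / 2)) +
      Real.log ((E.lam 2)⁻¹ + (E.lam 1)⁻¹) + Real.log (E.ν 2)) / Real.log (E.δ 2)⁻¹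

end EigenData

end

/-!
Since `1 - δ₂^{1/2} = Δ₂/λ₂`, the numerator of `T*_{IP,ε}` is
`α log N + 2 log Δ₂ + log ν₂ + log ((λ₂⁻¹ + λ₁⁻¹)/λ₂²)`.
Condition R pins the gap `Δ₂` to `N^{-2/3 ± s/2}` and `ν₂` to `N^{±2s}`, which accounts for
`(α - 4/3 ± 3s) log N`. Rigidity at `n = 1` puts `λ₁` and `λ₂` within `O(N^{-2/3+s/2})` of the
quantile `γ₁ ∈ [λ₋, λ₊]`, and `λ₋ > 0` because `d < 1`; so the last logarithm is `O(1)`,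
hence at most `s log N` for large `N`.
-/

open Set Filter Topology

noncomputable section

lemma sInf_setOf_eq_mem_Icc {f : ℝ → ℝ} {a b y : ℝ} (hab : a ≤ b)
    (hf : ContinuousOn f (Icc a b)) (hlt : ∀ t < a, f t ≠ y) (hfa : f a ≤ y) (hfb : y ≤ f b) :
    sInf {t | f t = y} ∈ Icc a b := by
  obtain ⟨t, ht, hft⟩ := intermediate_value_Icc hab hf ⟨hfa, hfb⟩
  have hbdd : ∀ u ∈ {t | f t = y}, a ≤ u := fun u hu => not_lt.1 fun h => hlt u h hu
  exact ⟨le_csInf ⟨t, hft⟩ hbdd, (csInf_le ⟨a, hbdd⟩ hft).trans ht.2⟩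

lemma abs_log_sub_mul_log_le {L x c r : ℝ} (hL : 0 < L) (hlo : L ^ (c - r) ≤ x)
    (hhi : x ≤ L ^ (c + r)) : |Real.log x - c * Real.log L| ≤ r * Real.log L := by
  have hx : 0 < x := (Real.rpow_pos_of_pos hL _).trans_le hlo
  have h₁ := Real.log_le_log (Real.rpow_pos_of_pos hL _) hlo
  have h₂ := Real.log_le_log hx hhi
  rw [Real.log_rpow hL] at h₁ h₂
  rw [abs_le]
  constructor <;> linarith

lemma abs_log_le_of_mem_Icc {a b x : ℝ} (ha : 0 < a) (hx : x ∈ Icc a b) :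
    |Real.log x| ≤ |Real.log a| + |Real.log b| := by
  have h₁ := Real.log_le_log ha hx.1
  have h₂ := Real.log_le_log (ha.trans_le hx.1) hx.2
  rw [abs_le]
  constructor <;> cases abs_cases (Real.log a) <;> cases abs_cases (Real.log b) <;> linarith

lemma inv_add_inv_div_sq_mem_Icc {a b x y : ℝ} (ha : 0 < a) (hx : x ∈ Icc a b)
    (hy : y ∈ Icc a b) : (y⁻¹ + x⁻¹) / y ^ 2 ∈ Icc (b⁻¹ / b ^ 2) (2 * a⁻¹ / a ^ 2) := by
  have hx0 : 0 < x := ha.trans_le hx.1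
  have hy0 : 0 < y := ha.trans_le hy.1
  constructor
  · calc b⁻¹ / b ^ 2 ≤ y⁻¹ / y ^ 2 := by gcongr; exacts [hy.2, hy.2]
      _ ≤ (y⁻¹ + x⁻¹) / y ^ 2 := by gcongr; exact le_add_of_nonneg_right (by positivity)
  · calc (y⁻¹ + x⁻¹) / y ^ 2 ≤ (a⁻¹ + a⁻¹) / a ^ 2 := by gcongr; exacts [hy.1, hx.1, hy.1]
      _ = 2 * a⁻¹ / a ^ 2 := by ring

section MarchenkoPastur

variable {d : ℝ}

def mpLowerEdge (d : ℝ) : ℝ := (1 - Real.sqrt d) ^ 2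

def mpUpperEdge (d : ℝ) : ℝ := (1 + Real.sqrt d) ^ 2

def mpCDF (d t : ℝ) : ℝ := ∫ x in Iic t, mpDensity d x

lemma mpLowerEdge_pos (hd : d ≠ 1) : 0 < mpLowerEdge d := by
  have : 1 - Real.sqrt d ≠ 0 := sub_ne_zero.2 fun h => hd (Real.sqrt_eq_one.1 h.symm)
  exact pow_two_pos_of_ne_zero this

lemma mpLowerEdge_lt_mpUpperEdge (hd : 0 < d) : mpLowerEdge d < mpUpperEdge d := by
  have := Real.sqrt_pos.2 hd
  unfold mpLowerEdge mpUpperEdge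
  nlinarith

lemma mpDensity_nonneg (hd : 0 ≤ d) (x : ℝ) : 0 ≤ mpDensity d x := by
  unfold mpDensity
  split_ifs with hx
  · positivity
  · exact le_rfl

lemma mpDensity_eq_zero_of_notMem_Ioo {x : ℝ} (hx : x ∉ Ioo (mpLowerEdge d) (mpUpperEdge d)) :
    mpDensity d x = 0 := by
  have hs := Real.sqrt_nonneg d
  have hnonpos : ((1 + Real.sqrt d) ^ 2 - x) * (x - (1 - Real.sqrt d) ^ 2) ≤ 0 := by
    rw [Set.mem_Ioo, not_and_or, not_lt, not_lt] at hx
    unfold mpLowerEdge mpUpperEdge at hx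
    rcases hx with hx | hx
    · exact mul_nonpos_of_nonneg_of_nonpos (by nlinarith) (by linarith)
    · exact mul_nonpos_of_nonpos_of_nonneg (by linarith) (by nlinarith)
  simp [mpDensity, max_eq_right hnonpos]

lemma mpDensity_pos (hd : 0 < d) {x : ℝ} (hx : x ∈ Ioo (mpLowerEdge d) (mpUpperEdge d)) :
    0 < mpDensity d x := by
  obtain ⟨hlo, hhi⟩ := hx
  have hx0 : 0 < x := (sq_nonneg _).trans_lt hlo
  have hprod : 0 < ((1 + Real.sqrt d) ^ 2 - x) * (x - (1 - Real.sqrt d) ^ 2) :=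
    mul_pos (sub_pos.2 hhi) (sub_pos.2 hlo)
  rw [mpDensity, if_pos hx0, max_eq_left hprod.le]
  have := Real.sqrt_pos.2 hprod
  positivity

lemma continuousOn_mpDensity : ContinuousOn (mpDensity d) (Ioi 0) := by
  have hcont : ContinuousOn (fun x : ℝ => (1 / (2 * Real.pi * d)) *
      Real.sqrt (max (((1 + Real.sqrt d) ^ 2 - x) * (x - (1 - Real.sqrt d) ^ 2)) 0) / x)
      (Ioi 0) :=
    ContinuousOn.div (by fun_prop) continuousOn_id fun x hx => (mem_Ioi.1 hx).ne'
  exact hcont.congr fun _ hx => if_pos (mem_Ioi.1 hx)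

lemma integrable_mpDensity (hd : d ≠ 1) : Integrable (mpDensity d) := by
  have hsub : Icc (mpLowerEdge d) (mpUpperEdge d) ⊆ Ioi 0 := fun x hx =>
    (mpLowerEdge_pos hd).trans_le hx.1
  refine (continuousOn_mpDensity.mono hsub).integrableOn_Icc.integrable_of_forall_notMem_eq_zero
    fun x hx => ?_
  exact mpDensity_eq_zero_of_notMem_Ioo fun h => hx (Ioo_subset_Icc_self h)

lemma mpCDF_eq_zero {t : ℝ} (ht : t ≤ mpLowerEdge d) : mpCDF d t = 0 :=
  setIntegral_eq_zero_of_forall_eq_zero fun _ hx =>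
    mpDensity_eq_zero_of_notMem_Ioo fun h => (h.1.trans_le ((mem_Iic.1 hx).trans ht)).false

lemma continuous_mpCDF (hd : d ≠ 1) : Continuous (mpCDF d) :=
  continuous_iff_continuousAt.2 fun t =>
    ((integrable_mpDensity hd).integrableOn (s := Iic (t + 1))).continuousOn_Iic_primitive_Iic
      |>.continuousAt (Iic_mem_nhds (lt_add_one t))

lemma mpCDF_mpUpperEdge_pos (hd0 : 0 < d) (hd1 : d ≠ 1) : 0 < mpCDF d (mpUpperEdge d) := by
  rw [mpCDF, setIntegral_pos_iff_support_of_nonneg_ae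
    (Eventually.of_forall (mpDensity_nonneg hd0.le)) (integrable_mpDensity hd1).integrableOn]
  have hsub : Ioo (mpLowerEdge d) (mpUpperEdge d) ⊆
      Function.support (mpDensity d) ∩ Iic (mpUpperEdge d) :=
    fun _ hx => ⟨(mpDensity_pos hd0 hx).ne', hx.2.le⟩
  refine lt_of_lt_of_le ?_ (measure_mono hsub)
  simpa using mpLowerEdge_lt_mpUpperEdge hd0

lemma mpQuantile_mem_Icc (hd0 : 0 < d) (hd1 : d ≠ 1) {N n : ℕ} (hn : 0 < n) (hN : 0 < N)
    (hnN : (n : ℝ) / N ≤ mpCDF d (mpUpperEdge d)) :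
    mpQuantile d N n ∈ Icc (mpLowerEdge d) (mpUpperEdge d) := by
  have hpos : (0 : ℝ) < n / N := by positivity
  refine sInf_setOf_eq_mem_Icc (mpLowerEdge_lt_mpUpperEdge hd0).le
    (continuous_mpCDF hd1).continuousOn (fun t ht => ?_) ?_ hnN
  · exact (mpCDF_eq_zero ht.le).trans_ne hpos.ne
  · exact (mpCDF_eq_zero le_rfl).trans_le hpos.le

end MarchenkoPastur

namespace EigenData

variable {N : ℕ} {d s : ℝ} {E : EigenData N}

lemma δ_rpow_half {n : ℕ} (hn : 0 < E.lam n) : E.δ n ^ (1 / 2 : ℝ) = E.lam 1 / E.lam n := by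
  rw [← Real.sqrt_eq_rpow, δ, ← div_pow, Real.sqrt_sq (div_nonneg E.lam_pos.le hn.le)]

lemma log_inv_δ_pos {n : ℕ} (h : E.lam 1 < E.lam n) : 0 < Real.log (E.δ n)⁻¹ := by
  have h1 := E.lam_pos
  rw [δ, inv_div, ← div_pow]
  exact Real.log_pos (one_lt_pow₀ ((one_lt_div h1).2 h) two_ne_zero)

lemma TstarIP_eq (α : ℝ) (h : E.lam 1 < E.lam 2) :
    E.TstarIP α = (α * Real.log N + 2 * Real.log (E.Δ 2) + Real.log (E.ν 2) +
      Real.log (((E.lam 2)⁻¹ + (E.lam 1)⁻¹) / E.lam 2 ^ 2)) / Real.log (E.δ 2)⁻¹ := by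
  have h1 := E.lam_pos
  have h2 : 0 < E.lam 2 := h1.trans h
  have hΔ : 0 < E.Δ 2 := sub_pos.2 h
  have hgap : 1 - E.δ 2 ^ (1 / 2 : ℝ) = E.Δ 2 / E.lam 2 := by
    rw [δ_rpow_half h2, Δ]; field_simp
  rw [TstarIP, hgap, Real.log_div hΔ.ne' h2.ne', Real.log_div (by positivity) (by positivity),
    Real.log_pow]
  push_cast
  ring

namespace CondR

lemma lam_one_lt_lam_two (h : E.CondR d s) (hN : 0 < N) : E.lam 1 < E.lam 2 := by
  obtain ⟨-, -, -, hgap, -⟩ := h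
  exact sub_pos.1 ((Real.rpow_pos_of_pos (Nat.cast_pos.2 hN) _).trans_le (hgap 2 (by simp)).1)

lemma abs_two_log_Δ_two_add_le (h : E.CondR d s) (hN : 0 < N) :
    |2 * Real.log (E.Δ 2) + 4 / 3 * Real.log N| ≤ s * Real.log N := by
  obtain ⟨-, -, -, hgap, -⟩ := h
  obtain ⟨hlo, hhi⟩ := hgap 2 (by simp)
  have hlog := abs_log_sub_mul_log_le (Nat.cast_pos.2 hN) hlo hhi
  rw [Δ, abs_le]
  rw [abs_le] at hlog
  constructor <;> linarith [hlog.1, hlog.2]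

lemma abs_log_ν_two_le (h : E.CondR d s) (hN : 2 ≤ N) :
    |Real.log (E.ν 2)| ≤ 2 * s * Real.log N := by
  obtain ⟨hβhi, hβlo, -⟩ := h
  have hN0 : (0 : ℝ) < N := by exact_mod_cast (by omega : 0 < N)
  have hβ₁ := abs_log_sub_mul_log_le hN0 (hβlo 1 (by simp)) (hβhi 1 (by simp; omega))
  have hβ₂ := abs_log_sub_mul_log_le hN0 (hβlo 2 (by simp)) (hβhi 2 (by simp; omega))
  have hb₂ : 0 < E.beta 2 := (Real.rpow_pos_of_pos hN0 _).trans_le (hβlo 2 (by simp))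
  have hb₁ := E.beta_one_pos
  rw [ν, Real.log_div (by positivity) (by positivity), Real.log_pow, Real.log_pow]
  rw [abs_le] at hβ₁ hβ₂ ⊢
  push_cast
  constructor <;> linarith [hβ₁.1, hβ₁.2, hβ₂.1, hβ₂.2]

lemma lam_one_two_mem_Icc (h : E.CondR d s) (hd0 : 0 < d) (hd1 : d ≠ 1) (hN : 0 < N)
    (hF : (1 : ℝ) / N ≤ mpCDF d (mpUpperEdge d)) :
    E.lam 1 ∈ Icc (mpLowerEdge d - (N : ℝ) ^ (-2 / 3 + s / 2 : ℝ))
        (mpUpperEdge d + 2 * (N : ℝ) ^ (-2 / 3 + s / 2 : ℝ)) ∧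
      E.lam 2 ∈ Icc (mpLowerEdge d - (N : ℝ) ^ (-2 / 3 + s / 2 : ℝ))
        (mpUpperEdge d + 2 * (N : ℝ) ^ (-2 / 3 + s / 2 : ℝ)) := by
  have h12 := h.lam_one_lt_lam_two hN
  obtain ⟨-, -, -, hgap, hrig⟩ := h
  obtain ⟨hγlo, hγhi⟩ := mpQuantile_mem_Icc hd0 hd1 one_pos hN (by simpa using hF)
  have hrig₁ := hrig 1 (by simp; omega)
  rw [show min 1 (N - 1 + 1) = 1 by omega, Nat.cast_one, Real.one_rpow, mul_one, abs_le] at hrig₁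
  have hgap₂ := (hgap 2 (by simp)).2
  exact ⟨⟨by linarith, by linarith⟩, ⟨by linarith, by linarith⟩⟩

end CondR

end EigenData

end

theorem TstarIP_bounds_general (d σ α s : ℝ)
    (hd0 : 0 < d) (hd1 : d < 1)
    (hσ1 : σ < 1 / 3)
    (hs0 : 0 < s) (hs1 : s < σ / 40) :
    ∃ N₀ : ℕ, ∀ N : ℕ, N₀ ≤ N → ∀ E : EigenData N, E.CondR d s →
      ((α - 4 / 3 - 4 * s) * Real.log N / Real.log (E.δ 2)⁻¹ ≤ E.TstarIP α ∧
        E.TstarIP α ≤ (α - 4 / 3 + 4 * s) * Real.log N / Real.log (E.δ 2)⁻¹) ∧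
      E.TstarIP α ∈ Set.Icc ((α - 4 / 3 - 5 * s) * Real.log N / Real.log (E.δ 2)⁻¹)
        ((α - 4 / 3 + 6 * s) * Real.log N / Real.log (E.δ 2)⁻¹) := by
  set a := mpLowerEdge d / 2 with ha_def
  set b := mpUpperEdge d + mpLowerEdge d with hb_def
  have ha : 0 < a := half_pos (mpLowerEdge_pos hd1.ne)
  have hb : 0 < b := add_pos ((mpLowerEdge_pos hd1.ne).trans (mpLowerEdge_lt_mpUpperEdge hd0))
    (mpLowerEdge_pos hd1.ne)
  have hη : Tendsto (fun N : ℕ => (N : ℝ) ^ (-2 / 3 + s / 2 : ℝ)) atTop (𝓝 0) := by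
    rw [show (-2 / 3 + s / 2 : ℝ) = -(2 / 3 - s / 2) by ring]
    exact (tendsto_rpow_neg_atTop (by linarith)).comp tendsto_natCast_atTop_atTop
  have hlog : Tendsto (fun N : ℕ => s * Real.log N) atTop atTop :=
    (Real.tendsto_log_atTop.comp tendsto_natCast_atTop_atTop).const_mul_atTop hs0
  obtain ⟨N₀, hN₀⟩ := eventually_atTop.1 <| (eventually_ge_atTop 2).and <|
    ((tendsto_const_div_atTop_nhds_zero_nat (1 : ℝ)).eventually_le_const
      (mpCDF_mpUpperEdge_pos hd0 hd1.ne)).and <| (hη.eventually_le_const ha).and <|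
    hlog.eventually_ge_atTop (|Real.log (b⁻¹ / b ^ 2)| + |Real.log (2 * a⁻¹ / a ^ 2)|)
  refine ⟨N₀, fun N hN E hR => ?_⟩
  obtain ⟨hN2, hF, hηa, hK⟩ := hN₀ N hN
  have hN0 : 0 < N := by omega
  obtain ⟨hlam₁, hlam₂⟩ := hR.lam_one_two_mem_Icc hd0 hd1.ne hN0 hF
  have hab : Icc (mpLowerEdge d - (N : ℝ) ^ (-2 / 3 + s / 2 : ℝ))
      (mpUpperEdge d + 2 * (N : ℝ) ^ (-2 / 3 + s / 2 : ℝ)) ⊆ Icc a b :=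
    Icc_subset_Icc (by linarith) (by linarith)
  have hrest := (abs_log_le_of_mem_Icc (by positivity)
    (inv_add_inv_div_sq_mem_Icc ha (hab hlam₁) (hab hlam₂))).trans hK
  have hΔ := hR.abs_two_log_Δ_two_add_le hN0
  have hν := hR.abs_log_ν_two_le hN2
  have hsL : 0 ≤ s * Real.log N := mul_nonneg hs0.le (Real.log_natCast_nonneg N)
  rw [abs_le] at hrest hΔ hν
  have h12 := hR.lam_one_lt_lam_two hN0
  have hD := E.log_inv_δ_pos h12
  rw [E.TstarIP_eq α h12]
  refine ⟨⟨?_, ?_⟩, ?_, ?_⟩ <;> apply div_le_div_of_nonneg_right _ hD.le <;> linarith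

/-- Bounds on `T*_{IP,ε}`: given Condition R(N,s),
`(α - 4/3 - 4s) log N / log δ₂⁻¹ ≤ T*_{IP,ε} ≤ (α - 4/3 + 4s) log N / log δ₂⁻¹`;
in particular `T*_{IP,ε} ∈ L̂_α`. -/
theorem TstarIP_bounds (d σ α s : ℝ)
    (hd0 : 0 < d) (hd1 : d < 1)
    (hσ0 : 0 < σ) (hσ1 : σ < 1 / 3)
    (hα : 10 / 3 + σ ≤ α)
    (hs0 : 0 < s) (hs1 : s < σ / 40) :
    ∃ N₀ : ℕ, ∀ N : ℕ, N₀ ≤ N → ∀ E : EigenData N, E.CondR d s →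
      ((α - 4 / 3 - 4 * s) * Real.log N / Real.log (E.δ 2)⁻¹ ≤ E.TstarIP α ∧
        E.TstarIP α ≤ (α - 4 / 3 + 4 * s) * Real.log N / Real.log (E.δ 2)⁻¹) ∧
      E.TstarIP α ∈ Set.Icc ((α - 4 / 3 - 5 * s) * Real.log N / Real.log (E.δ 2)⁻¹)
        ((α - 4 / 3 + 6 * s) * Real.log N / Real.log (E.δ 2)⁻¹) :=
  TstarIP_bounds_general d σ α s hd0 hd1 hσ1 hs0 hs1
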